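/- arXiv:1112.4254 — 4 statements merged into one kernel-verified Lean document; each statement's English description precedes it below -/
import Mathlib

section
/- If μ and ν are probability distributions on a finite set X and S : X → ℝ satisfies |E_μ(S) − E_ν(S)| ≥ r σ, where σ² = (Var_μ(S) + Var_ν(S))/2 > 0 and r > 0, then the total variation distance satisfies ‖μ − ν‖_TV ≥ 1 − 4/(4 + r²). -/
/-!
Write `d = μ - ν` and let `c` be the midpoint of the two means. Since `∑ d = 0`, the difference of
the means is `Δ = ∑ d (S - c)`, and Cauchy–Schwarz with `|d| ≤ μ + ν` gives
`Δ² ≤ (∑ |d|) · ∑ (μ + ν)(S - c)² = (∑ |d|) (2σ² + Δ²/2)`. The total variation distance is `∑ |d| / 2`,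
attained at `A = {d > 0}`, so it is at least `Δ² / (4σ² + Δ²) ≥ r² / (4 + r²)`.
-/

open Finset

section

variable {X : Type*} [Fintype X]

lemma sum_mul_sub_sq_eq (w S : X → ℝ) (hw : ∑ x, w x = 1) (c : ℝ) :
    ∑ x, w x * (S x - c) ^ 2
      = ∑ x, w x * (S x - ∑ y, w y * S y) ^ 2 + (∑ y, w y * S y - c) ^ 2 := by
  have expand : ∀ a : ℝ, ∑ x, w x * (S x - a) ^ 2
      = ∑ x, w x * S x ^ 2 - 2 * a * ∑ x, w x * S x + a ^ 2 := by
    intro a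
    have h : ∀ x, w x * (S x - a) ^ 2 = w x * S x ^ 2 - 2 * a * (w x * S x) + a ^ 2 * w x :=
      fun x => by ring
    simp_rw [h, sum_add_distrib, sum_sub_distrib, ← mul_sum, hw]
    ring
  rw [expand, expand]
  ring

lemma sum_filter_pos_eq_half_sum_abs {d : X → ℝ} (hd : ∑ x, d x = 0) :
    ∑ x with 0 < d x, d x = (∑ x, |d x|) / 2 := by
  have hpos : ∀ x, 2 * (if 0 < d x then d x else 0) = |d x| + d x := by
    intro x
    split_ifs with h
    · rw [abs_of_pos h]; ring
    · rw [abs_of_nonpos (not_lt.mp h)]; ring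
  have h := congrArg (fun f : X → ℝ => ∑ x, f x) (funext hpos)
  simp only [← mul_sum, sum_add_distrib, hd, add_zero] at h
  rw [sum_filter]
  linarith

lemma sq_sum_mul_sub_sum_mul_le (μ ν S : X → ℝ) (hμ0 : ∀ x, 0 ≤ μ x) (hν0 : ∀ x, 0 ≤ ν x)
    (hμ1 : ∑ x, μ x = 1) (hν1 : ∑ x, ν x = 1) :
    (∑ x, μ x * S x - ∑ x, ν x * S x) ^ 2
      ≤ (∑ x, |μ x - ν x|) * (∑ x, μ x * (S x - ∑ y, μ y * S y) ^ 2
          + ∑ x, ν x * (S x - ∑ y, ν y * S y) ^ 2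
          + (∑ x, μ x * S x - ∑ x, ν x * S x) ^ 2 / 2) := by
  set c := (∑ x, μ x * S x + ∑ x, ν x * S x) / 2
  have hΔ : ∑ x, μ x * S x - ∑ x, ν x * S x = ∑ x, (μ x - ν x) * (S x - c) := by
    have h : ∀ x, (μ x - ν x) * (S x - c) = μ x * S x - ν x * S x - c * μ x + c * ν x :=
      fun x => by ring
    simp_rw [h, sum_add_distrib, sum_sub_distrib, ← mul_sum, hμ1, hν1]
    ring
  have hsplit : ∑ x, (μ x + ν x) * (S x - c) ^ 2
      = ∑ x, μ x * (S x - c) ^ 2 + ∑ x, ν x * (S x - c) ^ 2 := by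
    rw [← sum_add_distrib]
    exact sum_congr rfl fun x _ => by ring
  have hcs : (∑ x, (μ x - ν x) * (S x - c)) ^ 2
      ≤ (∑ x, |μ x - ν x|) * ∑ x, (μ x + ν x) * (S x - c) ^ 2 := by
    refine sum_sq_le_sum_mul_sum_of_sq_le_mul _ (fun x _ => abs_nonneg _)
      (fun x _ => by have := hμ0 x; have := hν0 x; positivity) fun x _ => ?_
    have habs : |μ x - ν x| ≤ μ x + ν x := by
      rw [abs_le]; constructor <;> linarith [hμ0 x, hν0 x]
    calc ((μ x - ν x) * (S x - c)) ^ 2 = |μ x - ν x| * |μ x - ν x| * (S x - c) ^ 2 := by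
          rw [abs_mul_abs_self]; ring
      _ ≤ |μ x - ν x| * ((μ x + ν x) * (S x - c) ^ 2) := by
          rw [mul_assoc]; gcongr
  rw [hsplit, sum_mul_sub_sq_eq μ S hμ1, sum_mul_sub_sq_eq ν S hν1, ← hΔ] at hcs
  convert hcs using 2
  ring

end

lemma div_add_le_of_le_mul_add {a b s t : ℝ} (hs : 0 < s) (ha : 0 ≤ a) (hab : a ≤ b)
    (hb : b ≤ t * (s + b)) : a / (s + a) ≤ t := by
  rw [div_le_iff₀ (by positivity)]
  nlinarith

theorem stmt1_general {X : Type*} [Fintype X] (μ ν : X → ℝ) (S : X → ℝ) (r σ : ℝ)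
    (hμ0 : ∀ x, 0 ≤ μ x) (hν0 : ∀ x, 0 ≤ ν x)
    (hμ1 : ∑ x, μ x = 1) (hν1 : ∑ x, ν x = 1)
    (hr : 0 < r) (hσpos : 0 < σ)
    (hσ : σ ^ 2 = ((∑ x, μ x * (S x - ∑ y, μ y * S y) ^ 2)
        + (∑ x, ν x * (S x - ∑ y, ν y * S y) ^ 2)) / 2)
    (hE : |(∑ x, μ x * S x) - ∑ x, ν x * S x| ≥ r * σ) :
    (Finset.univ.powerset.sup' (Finset.powerset_nonempty _)
        (fun A : Finset X => (∑ x ∈ A, μ x) - ∑ x ∈ A, ν x))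
      ≥ 1 - 4 / (4 + r ^ 2) := by
  set Δ := ∑ x, μ x * S x - ∑ x, ν x * S x
  set T := ∑ x, |μ x - ν x|
  have hsum : ∑ x, (μ x - ν x) = 0 := by rw [sum_sub_distrib, hμ1, hν1, sub_self]
  have hTV : T / 2 ≤ Finset.univ.powerset.sup' (Finset.powerset_nonempty _)
      (fun A : Finset X => (∑ x ∈ A, μ x) - ∑ x ∈ A, ν x) := by
    rw [← sum_filter_pos_eq_half_sum_abs hsum, sum_sub_distrib]
    exact le_sup' (fun A : Finset X => (∑ x ∈ A, μ x) - ∑ x ∈ A, ν x)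
      (mem_powerset.mpr (subset_univ _))
  have hΔ : Δ ^ 2 ≤ T / 2 * (4 * σ ^ 2 + Δ ^ 2) := by
    have := sq_sum_mul_sub_sum_mul_le μ ν S hμ0 hν0 hμ1 hν1
    rw [hσ]
    linarith
  have hrΔ : r ^ 2 * σ ^ 2 ≤ Δ ^ 2 := by
    rw [← mul_pow, ← sq_abs Δ]
    exact pow_le_pow_left₀ (by positivity) hE 2
  calc 1 - 4 / (4 + r ^ 2) = r ^ 2 * σ ^ 2 / (4 * σ ^ 2 + r ^ 2 * σ ^ 2) := by
        field_simp; ring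
    _ ≤ T / 2 := div_add_le_of_le_mul_add (by positivity) (by positivity) hrΔ hΔ
    _ ≤ _ := hTV

/-- Method of distinguishing statistics: if `|E_μ S − E_ν S| ≥ r σ` with
`σ² = (Var_μ S + Var_ν S)/2 > 0`, then the total variation distance
`max_A (μ(A) − ν(A))` is at least `1 − 4/(4+r²)`. -/
theorem stmt1 {X : Type*} [Fintype X] [Nonempty X] (μ ν : X → ℝ) (S : X → ℝ) (r σ : ℝ)
    (hμ0 : ∀ x, 0 ≤ μ x) (hν0 : ∀ x, 0 ≤ ν x)
    (hμ1 : ∑ x, μ x = 1) (hν1 : ∑ x, ν x = 1)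
    (hr : 0 < r) (hσpos : 0 < σ)
    (hσ : σ ^ 2 = ((∑ x, μ x * (S x - ∑ y, μ y * S y) ^ 2)
        + (∑ x, ν x * (S x - ∑ y, ν y * S y) ^ 2)) / 2)
    (hE : |(∑ x, μ x * S x) - ∑ x, ν x * S x| ≥ r * σ) :
    (Finset.univ.powerset.sup' (Finset.powerset_nonempty _)
        (fun A : Finset X => (∑ x ∈ A, μ x) - ∑ x ∈ A, ν x))
      ≥ 1 - 4 / (4 + r ^ 2) :=
  stmt1_general μ ν S r σ hμ0 hν0 hμ1 hν1 hr hσpos hσ hE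
end

section
/- For the lazy Metropolis chain started at the all-ones state, Var_1(S_t) ≤ n/(1+θ)², where S_t = S(X_t). -/
/-!
The number of ones `S_t` is itself a birth–death chain, so its first two moments obey a closed
linear recursion driven by `γ = 1 - (1+θ)/(2n)` and `a = 1 - (1+θ)/n`. Solving it from `S_0 = n`
gives `E S_t = n(θ + γ^t)/(1+θ)` and
`Var S_t = n((θ + γ^t)(1 - γ^t) + (n-1)(a^t - γ^{2t}))/(1+θ)²`,
the variance of `R_t + Binomial(n - R_t, θ/(1+θ))` for `R_t` the unrefreshed coordinates. Since
`a ≤ γ²` and `θ ≤ 1`, the bracket is at most `1`.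
-/

open Finset

/-- number of ones of a vertex of the hypercube -/
def numOnes {n : ℕ} (x : Fin n → Bool) : ℕ :=
  (Finset.univ.filter fun i => x i = true).card

/-- Hamming distance -/
def ham {n : ℕ} (x y : Fin n → Bool) : ℕ :=
  (Finset.univ.filter fun i => x i ≠ y i).card

/-- Transition kernel of the lazy random walk Metropolis chain for
`π(x) = θ^{S(x)}(1+θ)^{-n}`. -/
noncomputable def metroP (n : ℕ) (θ : ℝ) (x y : Fin n → Bool) : ℝ :=
  if y = x then 1 / 2 + ((n : ℝ) - numOnes x) / (2 * n) * (1 - θ)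
  else if ham x y = 1 then
    (if numOnes y < numOnes x then 1 / (2 * n) else θ / (2 * n))
  else 0

variable {n : ℕ}

def flipBit (x : Fin n → Bool) (i : Fin n) : Fin n → Bool := Function.update x i (!x i)

lemma flipBit_ne (x : Fin n → Bool) (i : Fin n) : flipBit x i ≠ x := fun h => by
  simpa [flipBit] using congrFun h i

lemma flipBit_injective (x : Fin n → Bool) : Function.Injective (flipBit x) := by
  intro i j h
  by_contra hij
  simpa [flipBit, Function.update_apply, hij] using congrFun h i

lemma ham_flipBit (x : Fin n → Bool) (i : Fin n) : ham x (flipBit x i) = 1 := by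
  rw [ham, Finset.card_eq_one]
  exact ⟨i, by ext j; by_cases h : j = i <;> simp [flipBit, Function.update_apply, h]⟩

lemma exists_flipBit_of_ham_eq_one {x y : Fin n → Bool} (h : ham x y = 1) :
    ∃ i, y = flipBit x i := by
  obtain ⟨i, hi⟩ := Finset.card_eq_one.mp h
  refine ⟨i, funext fun j => ?_⟩
  have hj := congrArg (j ∈ ·) hi
  by_cases hji : j = i
  · subst hji
    simp only [mem_filter, mem_univ, true_and, mem_singleton, iff_true, eq_iff_iff] at hj
    simp only [flipBit, Function.update_self]
    revert hj; cases x j <;> cases y j <;> simp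
  · simp only [mem_filter, mem_univ, true_and, mem_singleton, hji, eq_iff_iff, iff_false,
      not_not] at hj
    simp [flipBit, hji, hj]

lemma numOnes_flipBit_of_true {x : Fin n → Bool} {i : Fin n} (h : x i = true) :
    numOnes (flipBit x i) + 1 = numOnes x := by
  have : (univ.filter fun j => flipBit x i j = true) =
      (univ.filter fun j => x j = true).erase i := by
    ext j; by_cases hj : j = i <;> simp [flipBit, Function.update_apply, hj, h]
  rw [numOnes, this, Finset.card_erase_add_one (by simp [h]), numOnes]

lemma numOnes_flipBit_of_false {x : Fin n → Bool} {i : Fin n} (h : x i = false) :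
    numOnes (flipBit x i) = numOnes x + 1 := by
  have : (univ.filter fun j => flipBit x i j = true) =
      insert i (univ.filter fun j => x j = true) := by
    ext j; by_cases hj : j = i <;> simp [flipBit, Function.update_apply, hj, h]
  rw [numOnes, this, Finset.card_insert_of_notMem (by simp [h]), numOnes]

lemma numOnes_le (x : Fin n → Bool) : numOnes x ≤ n :=
  (Finset.card_filter_le _ _).trans_eq (Finset.card_fin n)

lemma sum_ite_eq_true_nsmul {M : Type*} [AddCommMonoid M] (x : Fin n → Bool) (a b : M) :
    ∑ i, (if x i = true then a else b) = numOnes x • a + (n - numOnes x) • b := by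
  rw [Finset.sum_ite, sum_const, sum_const, numOnes]
  congr 2
  have := card_filter_add_card_filter_not (s := (univ : Finset (Fin n))) (fun i => x i = true)
  rw [Finset.card_univ, Fintype.card_fin] at this
  omega

/-- `E[f(S₁) | S₀ = s]`: the number of ones is itself a Markov chain (a birth–death chain). -/
noncomputable def lumpedStep (n : ℕ) (θ : ℝ) (f : ℝ → ℝ) (s : ℝ) : ℝ :=
  (1 / 2 + (n - s) / (2 * n) * (1 - θ)) * f s + s / (2 * n) * f (s - 1)
    + θ * (n - s) / (2 * n) * f (s + 1)

lemma metroP_flipBit_mul (θ : ℝ) (f : ℝ → ℝ) (x : Fin n → Bool) (i : Fin n) :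
    metroP n θ x (flipBit x i) * f (numOnes (flipBit x i)) =
      if x i = true then 1 / (2 * n) * f (numOnes x - 1)
      else θ / (2 * n) * f (numOnes x + 1) := by
  rw [metroP, if_neg (flipBit_ne x i), if_pos (ham_flipBit x i)]
  cases hi : x i
  · have h := numOnes_flipBit_of_false hi
    simp [h]
  · have h := numOnes_flipBit_of_true hi
    simp [← h]

lemma sum_metroP_mul (θ : ℝ) (f : ℝ → ℝ) (x : Fin n → Bool) :
    ∑ y, metroP n θ x y * f (numOnes y) = lumpedStep n θ f (numOnes x) := by
  have hflips : image (flipBit x) univ ⊆ univ.erase x := fun y hy => by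
    obtain ⟨i, -, rfl⟩ := mem_image.mp hy
    exact mem_erase.mpr ⟨flipBit_ne x i, mem_univ _⟩
  have hrest : ∀ y ∈ univ.erase x, y ∉ image (flipBit x) univ →
      metroP n θ x y * f (numOnes y) = 0 := fun y hy hyflip => by
    have hham : ham x y ≠ 1 := fun h => by
      obtain ⟨i, rfl⟩ := exists_flipBit_of_ham_eq_one h
      exact hyflip (mem_image_of_mem _ (mem_univ i))
    simp [metroP, ne_of_mem_erase hy, hham]
  rw [← add_sum_erase univ _ (mem_univ x), ← sum_subset hflips hrest,
    sum_image fun i _ j _ h => flipBit_injective x h]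
  simp only [metroP_flipBit_mul, sum_ite_eq_true_nsmul, nsmul_eq_mul, Nat.cast_sub (numOnes_le x)]
  rw [metroP, if_pos rfl, lumpedStep]
  ring

lemma sum_sum_metroP_mul (θ : ℝ) (f : ℝ → ℝ) (ν : (Fin n → Bool) → ℝ) :
    ∑ x, (∑ y, ν y * metroP n θ y x) * f (numOnes x) =
      ∑ y, ν y * lumpedStep n θ f (numOnes y) := by
  simp_rw [sum_mul, ← sum_metroP_mul, mul_sum, mul_assoc]
  exact sum_comm

/-- The paper's `γ`: a step refreshes a given coordinate (resamples it from `Bernoulli(θ/(1+θ))`)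
with probability `(1+θ)/(2n)`. `keepPairProb` is the chance that a step refreshes neither of two
given coordinates. -/
noncomputable def keepProb (n : ℕ) (θ : ℝ) : ℝ := 1 - (1 + θ) / (2 * n)

noncomputable def keepPairProb (n : ℕ) (θ : ℝ) : ℝ := 1 - (1 + θ) / n

lemma lumpedStep_pow_zero (hn : n ≠ 0) (θ s : ℝ) : lumpedStep n θ (· ^ 0) s = 1 := by
  simp only [lumpedStep, pow_zero]
  field_simp
  ring

lemma lumpedStep_pow_one (hn : n ≠ 0) (θ s : ℝ) :
    lumpedStep n θ (· ^ 1) s = keepProb n θ * s + θ / 2 := by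
  simp only [lumpedStep, keepProb, pow_one]
  field_simp
  ring

lemma lumpedStep_pow_two (hn : n ≠ 0) (θ s : ℝ) :
    lumpedStep n θ (· ^ 2) s =
      keepPairProb n θ * s ^ 2 + (θ + (1 - θ) / (2 * n)) * s + θ / 2 := by
  simp only [lumpedStep, keepPairProb]
  field_simp
  ring

def moment (ν : (Fin n → Bool) → ℝ) (k : ℕ) : ℝ := ∑ x, ν x * (numOnes x : ℝ) ^ k

lemma moment_step (θ : ℝ) (ν : (Fin n → Bool) → ℝ) (k : ℕ) :
    moment (fun x => ∑ y, ν y * metroP n θ y x) k =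
      ∑ y, ν y * lumpedStep n θ (· ^ k) (numOnes y) :=
  sum_sum_metroP_mul θ (· ^ k) ν

lemma moment_step_zero (hn : n ≠ 0) (θ : ℝ) (ν : (Fin n → Bool) → ℝ) :
    moment (fun x => ∑ y, ν y * metroP n θ y x) 0 = moment ν 0 := by
  rw [moment_step, moment]
  simp_rw [lumpedStep_pow_zero hn, pow_zero]

lemma moment_step_one (hn : n ≠ 0) (θ : ℝ) (ν : (Fin n → Bool) → ℝ) :
    moment (fun x => ∑ y, ν y * metroP n θ y x) 1 =
      keepProb n θ * moment ν 1 + θ / 2 * moment ν 0 := by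
  rw [moment_step]
  simp only [lumpedStep_pow_one hn, moment, mul_sum, ← sum_add_distrib]
  exact sum_congr rfl fun _ _ => by ring

lemma moment_step_two (hn : n ≠ 0) (θ : ℝ) (ν : (Fin n → Bool) → ℝ) :
    moment (fun x => ∑ y, ν y * metroP n θ y x) 2 =
      keepPairProb n θ * moment ν 2 + (θ + (1 - θ) / (2 * n)) * moment ν 1
        + θ / 2 * moment ν 0 := by
  rw [moment_step]
  simp only [lumpedStep_pow_two hn, moment, mul_sum, ← sum_add_distrib]
  exact sum_congr rfl fun _ _ => by ring

lemma numOnes_const_true : numOnes (fun _ : Fin n => true) = n := by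
  simp [numOnes]

lemma moment_indicator_const_true (k : ℕ) :
    moment (fun x : Fin n → Bool => if x = fun _ => true then 1 else 0) k = (n : ℝ) ^ k := by
  simp [moment, numOnes_const_true]

section Chain

variable {θ : ℝ} {μ : ℕ → (Fin n → Bool) → ℝ}

lemma moment_zero_eq (hn : n ≠ 0) (hμ0 : μ 0 = fun x => if x = (fun _ => true) then 1 else 0)
    (hμ : ∀ t x, μ (t + 1) x = ∑ y, μ t y * metroP n θ y x) (t : ℕ) :
    moment (μ t) 0 = 1 := by
  induction t with
  | zero => rw [hμ0, moment_indicator_const_true, pow_zero]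
  | succ t ih => rw [funext (hμ t), moment_step_zero hn, ih]

lemma moment_one_eq (hn : n ≠ 0) (hθ : 1 + θ ≠ 0)
    (hμ0 : μ 0 = fun x => if x = (fun _ => true) then 1 else 0)
    (hμ : ∀ t x, μ (t + 1) x = ∑ y, μ t y * metroP n θ y x) (t : ℕ) :
    moment (μ t) 1 = n * (θ + keepProb n θ ^ t) / (1 + θ) := by
  induction t with
  | zero =>
    rw [hμ0, moment_indicator_const_true]
    field_simp
    ring
  | succ t ih =>
    rw [funext (hμ t), moment_step_one hn, ih, moment_zero_eq hn hμ0 hμ, pow_succ]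
    generalize keepProb n θ ^ t = G
    rw [keepProb]
    field_simp
    ring

lemma moment_two_eq (hn : n ≠ 0) (hθ : 1 + θ ≠ 0)
    (hμ0 : μ 0 = fun x => if x = (fun _ => true) then 1 else 0)
    (hμ : ∀ t x, μ (t + 1) x = ∑ y, μ t y * metroP n θ y x) (t : ℕ) :
    moment (μ t) 2 = moment (μ t) 1 ^ 2 + n * ((θ + keepProb n θ ^ t) * (1 - keepProb n θ ^ t)
      + (n - 1) * (keepPairProb n θ ^ t - (keepProb n θ ^ t) ^ 2)) / (1 + θ) ^ 2 := by
  rw [moment_one_eq hn hθ hμ0 hμ]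
  induction t with
  | zero =>
    rw [hμ0, moment_indicator_const_true]
    field_simp
    ring
  | succ t ih =>
    rw [funext (hμ t), moment_step_two hn, ih, moment_one_eq hn hθ hμ0 hμ,
      moment_zero_eq hn hμ0 hμ, pow_succ (keepProb n θ), pow_succ (keepPairProb n θ)]
    generalize keepProb n θ ^ t = G
    generalize keepPairProb n θ ^ t = A
    rw [keepProb, keepPairProb]
    field_simp
    ring

end Chain

lemma keepProb_nonneg (hn : n ≠ 0) {θ : ℝ} (hθ : θ ≤ 1) : 0 ≤ keepProb n θ := by
  have : (1 : ℝ) ≤ n := by exact_mod_cast Nat.one_le_iff_ne_zero.mpr hn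
  rw [keepProb, sub_nonneg, div_le_one (by positivity)]
  linarith

lemma keepProb_le_one {θ : ℝ} (hθ : -1 ≤ θ) : keepProb n θ ≤ 1 := by
  rw [keepProb, sub_le_self_iff]
  have : 0 ≤ 1 + θ := by linarith
  positivity

lemma keepPairProb_nonneg (hn : 2 ≤ n) {θ : ℝ} (hθ : θ ≤ 1) : 0 ≤ keepPairProb n θ := by
  have : (2 : ℝ) ≤ n := by exact_mod_cast hn
  rw [keepPairProb, sub_nonneg, div_le_one (by positivity)]
  linarith

lemma keepProb_sq (θ : ℝ) :
    keepProb n θ ^ 2 = keepPairProb n θ + ((1 + θ) / (2 * n)) ^ 2 := by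
  rw [keepProb, keepPairProb]
  ring

lemma keepPairProb_pow_le (hn : 2 ≤ n) {θ : ℝ} (hθ : θ ≤ 1) (t : ℕ) :
    keepPairProb n θ ^ t ≤ (keepProb n θ ^ t) ^ 2 := by
  rw [← pow_mul, mul_comm, pow_mul]
  exact pow_le_pow_left₀ (keepPairProb_nonneg hn hθ)
    (by rw [keepProb_sq]; exact le_add_of_nonneg_right (sq_nonneg _)) t

lemma variance_factor_le_one (hn : n ≠ 0) {θ : ℝ} (hθ0 : -1 ≤ θ) (hθ1 : θ ≤ 1) (t : ℕ) :
    (θ + keepProb n θ ^ t) * (1 - keepProb n θ ^ t)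
      + (n - 1) * (keepPairProb n θ ^ t - (keepProb n θ ^ t) ^ 2) ≤ 1 := by
  have hG0 : 0 ≤ keepProb n θ ^ t := pow_nonneg (keepProb_nonneg hn hθ1) t
  have hG1 : keepProb n θ ^ t ≤ 1 :=
    pow_le_one₀ (keepProb_nonneg hn hθ1) (keepProb_le_one hθ0)
  have hpair : (n - 1 : ℝ) * (keepPairProb n θ ^ t - (keepProb n θ ^ t) ^ 2) ≤ 0 := by
    obtain rfl | hn2 : n = 1 ∨ 2 ≤ n := by omega
    · simp
    · have : (1 : ℝ) ≤ n := by exact_mod_cast hn2.trans' one_le_two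
      exact mul_nonpos_of_nonneg_of_nonpos (by linarith)
        (sub_nonpos.mpr (keepPairProb_pow_le hn2 hθ1 t))
  nlinarith

/-- For the lazy Metropolis chain started at the all-ones state,
`Var_1(S_t) ≤ n/(1+θ)²`. -/
theorem stmt9 (n : ℕ) (hn : 0 < n) (θ : ℝ) (hθ0 : 0 < θ) (hθ1 : θ ≤ 1)
    (μ : ℕ → (Fin n → Bool) → ℝ)
    (hμ0 : μ 0 = fun x => if x = (fun _ => true) then 1 else 0)
    (hμ : ∀ t x, μ (t + 1) x = ∑ y, μ t y * metroP n θ y x)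
    (t : ℕ) :
    (∑ x, μ t x * (numOnes x : ℝ) ^ 2) - (∑ x, μ t x * (numOnes x : ℝ)) ^ 2
      ≤ n / (1 + θ) ^ 2 := by
  have hn0 : n ≠ 0 := hn.ne'
  have hθ : 1 + θ ≠ 0 := by positivity
  have hvar := moment_two_eq hn0 hθ hμ0 hμ t
  simp only [moment, pow_one] at hvar
  rw [hvar, add_sub_cancel_left]
  gcongr
  exact mul_le_of_le_one_right n.cast_nonneg (variance_factor_le_one hn0 (by linarith) hθ1 t)
end

section
/- Let (S_t) be a Markov chain on {0,...,n} with |S_{t+1} − S_t| ≤ 1 and E[S_t | S_0,...,S_i] = γ^{t−i}(S_i − nθ/(1+θ)) + nθ/(1+θ) for all 0 ≤ i ≤ t, where γ = 1 − (1+θ)/(2n) and θ ∈ (0,1]. Then the martingale Y_i = E[S_t | S_0,...,S_i] has bounded differences |Y_i − Y_{i−1}| ≤ (3/2) γ^{t−i}. -/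
/-!
Writing `Y_i = γ^{t-i} (S_i - c) + c` with `c = nθ/(1+θ)`, the increment factors as
`Y_i - Y_{i-1} = γ^{t-i} ((S_i - S_{i-1}) + (1 - γ)(S_{i-1} - c))`.
The first summand is a single step of the chain, at most `1` in absolute value; the second is
`((1+θ) S_{i-1} - nθ) / (2n)`, which for `0 ≤ S_{i-1} ≤ n` lies between `-θ/2` and `1/2`.
-/

section AffineMartingale

variable {γ c : ℝ} {S Y : ℕ → ℝ} {t j : ℕ}

lemma sub_eq_of_affine (hY : ∀ i, i ≤ t → Y i = γ ^ (t - i) * (S i - c) + c) (hjt : j + 1 ≤ t) :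
    Y (j + 1) - Y j = γ ^ (t - (j + 1)) * ((S (j + 1) - S j) + (1 - γ) * (S j - c)) := by
  have hpow : t - j = t - (j + 1) + 1 := by omega
  rw [hY (j + 1) hjt, hY j (by omega), hpow, pow_succ]
  ring

lemma abs_sub_le_of_affine (hY : ∀ i, i ≤ t → Y i = γ ^ (t - i) * (S i - c) + c)
    (hjt : j + 1 ≤ t) (hγ : 0 ≤ γ) {a b : ℝ} (hstep : |S (j + 1) - S j| ≤ a)
    (hdrift : |(1 - γ) * (S j - c)| ≤ b) :
    |Y (j + 1) - Y j| ≤ (a + b) * γ ^ (t - (j + 1)) := by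
  rw [sub_eq_of_affine hY hjt, abs_mul, abs_pow, abs_of_nonneg hγ, mul_comm]
  gcongr
  exact (abs_add_le _ _).trans (add_le_add hstep hdrift)

end AffineMartingale

section LazyMetropolis

variable {n θ : ℝ}

lemma one_sub_div_nonneg (hn : 1 ≤ n) (hθ1 : θ ≤ 1) : 0 ≤ 1 - (1 + θ) / (2 * n) := by
  rw [sub_nonneg, div_le_one (by positivity)]
  linarith

lemma abs_drift_le_half (hn : 0 < n) (hθ : 0 < 1 + θ) (hθ1 : θ ≤ 1) {s : ℝ} (hs0 : 0 ≤ s)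
    (hsn : s ≤ n) :
    |(1 - (1 - (1 + θ) / (2 * n))) * (s - n * θ / (1 + θ))| ≤ 1 / 2 := by
  have hdrift : (1 - (1 - (1 + θ) / (2 * n))) * (s - n * θ / (1 + θ))
      = ((1 + θ) * s - n * θ) / (2 * n) := by
    field_simp
    ring
  rw [hdrift, abs_le, le_div_iff₀ (by positivity), div_le_iff₀ (by positivity)]
  constructor <;> nlinarith

end LazyMetropolis

/-- If `0 ≤ S_i ≤ n`, `|S_{i+1} − S_i| ≤ 1`, and the Doob martingale is
`Y_i = γ^{t−i}(S_i − nθ/(1+θ)) + nθ/(1+θ)` with `γ = 1 − (1+θ)/(2n)`, then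
`|Y_i − Y_{i−1}| ≤ (3/2) γ^{t−i}` for `1 ≤ i ≤ t`. -/
theorem stmt10 (n : ℕ) (hn : 0 < n) (θ : ℝ) (hθ0 : 0 < θ) (hθ1 : θ ≤ 1)
    (S : ℕ → ℝ) (hS : ∀ i, 0 ≤ S i ∧ S i ≤ n) (hstep : ∀ i, |S (i + 1) - S i| ≤ 1)
    (t : ℕ) (Y : ℕ → ℝ)
    (hY : ∀ i, i ≤ t →
      Y i = (1 - (1 + θ) / (2 * n)) ^ (t - i) * (S i - n * θ / (1 + θ)) + n * θ / (1 + θ))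
    (i : ℕ) (hi1 : 1 ≤ i) (hit : i ≤ t) :
    |Y i - Y (i - 1)| ≤ (3 / 2) * (1 - (1 + θ) / (2 * n)) ^ (t - i) := by
  obtain ⟨j, rfl⟩ : ∃ j, i = j + 1 := ⟨i - 1, by omega⟩
  have hn' : (1 : ℝ) ≤ n := by exact_mod_cast hn
  have hdrift := abs_drift_le_half (by linarith) (by linarith) hθ1 (hS j).1 (hS j).2
  have h := abs_sub_le_of_affine hY hit (one_sub_div_nonneg hn' hθ1) (hstep j) hdrift
  rw [Nat.add_sub_cancel]
  convert h using 2
  norm_num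
end

section
/- Let (R_j) be a non-negative supermartingale adapted to (W_j) with R_0 = k, increments bounded above by B (R_{j+1} − R_j ≤ B), and conditional variance Var(R_{j+1} | W_0,...,W_j) ≥ σ² > 0 on the event {τ > j}, where τ is a stopping time. If h ≥ 2B, then for any u > 0, P_k{τ > u} ≤ k/h + 3kh/(u σ²). -/
/-!
Let `N = ⌊u⌋₊ + 1`, let `H` be the first time in `[0, N]` at which `R` reaches `h`, and stop the
process at `G = min H (min τ N)`. On `{N ≤ τ}` either `R` reaches `h` by time `N`, which has
probability at most `k / h` by optional stopping, or `G = N`. Up to time `G` the process stays in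
`[0, c]` with `c = h + B`, so the stopped process `X` is a bounded supermartingale and the
conditional Pythagoras identity gives
`E (c - X (t+1))² = E (c - E[X (t+1) | F t])² + E Var[X (t+1) | F t] ≥ E (c - X t)² + σ² P(t < G)`,
because `E[X (t+1) | F t] ≤ X t ≤ c`. Summing over `t < N` yields
`σ² N P(G = N) ≤ c² - (c - k)² ≤ 3 k h`.
-/

open MeasureTheory ProbabilityTheory

section HittingTime

variable {Ω : Type*} {R : ℕ → Ω → ℝ} {a : ℝ} {N : ℕ}

theorem le_add_of_le_hittingBtwn {ω : Ω} {B : ℝ} (hB : 0 ≤ B) (h0 : R 0 ω < a)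
    (hincr : ∀ j, R (j + 1) ω - R j ω ≤ B) {s : ℕ}
    (hs : s ≤ hittingBtwn R (Set.Ici a) 0 N ω) :
    R s ω ≤ a + B := by
  cases s with
  | zero => linarith
  | succ r =>
    have hr : R r ω < a := by
      simpa using notMem_of_lt_hittingBtwn (Nat.lt_of_succ_le hs) r.zero_le
    linarith [hincr r]

theorem setOf_le_subset_union_hittingBtwn (τ : Ω → ℕ) :
    {ω | N ≤ τ ω} ⊆ {ω | ∃ j ≤ N, a ≤ R j ω} ∪
      {ω | min (hittingBtwn R (Set.Ici a) 0 N ω) (min (τ ω) N) = N} := by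
  intro ω (hω : N ≤ τ ω)
  by_cases hA : ∃ j ≤ N, a ≤ R j ω
  · exact Or.inl hA
  · have hH : hittingBtwn R (Set.Ici a) 0 N ω = N :=
      (hittingBtwn_le ω).eq_or_lt.resolve_right fun hlt =>
        hA ⟨_, hlt.le, hittingBtwn_mem_set_of_hittingBtwn_lt hlt⟩
    exact Or.inr (by simp [hH, hω])

end HittingTime

namespace MeasureTheory

section ConditionalPythagoras

variable {Ω : Type*} {m m₀ : MeasurableSpace Ω} {μ : Measure[m₀] Ω}

theorem integral_const_sub_sq_eq_add_condExp [IsFiniteMeasure μ] (hm : m ≤ m₀) {Y : Ω → ℝ}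
    (hY : MemLp Y 2 μ) (c : ℝ) :
    ∫ ω, (c - Y ω) ^ 2 ∂μ =
      ∫ ω, (c - μ[Y|m] ω) ^ 2 ∂μ + ∫ ω, (Y ω - μ[Y|m] ω) ^ 2 ∂μ := by
  set Z := μ[Y|m]
  have hZ : MemLp Z 2 μ := hY.condExp one_le_two
  have hD : MemLp (fun ω => c - Z ω) 2 μ := (memLp_const c).sub hZ
  have hE : MemLp (fun ω => Y ω - Z ω) 2 μ := hY.sub hZ
  have hcross : ∫ ω, (c - Z ω) * (Y ω - Z ω) ∂μ = 0 := by
    have hDY : Integrable (fun ω => (c - Z ω) * Y ω) μ := hD.integrable_mul hY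
    have hDZ : Integrable (fun ω => (c - Z ω) * Z ω) μ := hD.integrable_mul hZ
    have hpull : μ[(fun ω => c - Z ω) * Y|m] =ᵐ[μ] (fun ω => c - Z ω) * Z :=
      condExp_mul_of_stronglyMeasurable_left
        (stronglyMeasurable_const.sub stronglyMeasurable_condExp) hDY (hY.integrable one_le_two)
    have h := integral_congr_ae hpull
    rw [integral_condExp hm] at h
    simp only [mul_sub]
    rw [integral_sub hDY hDZ]
    exact sub_eq_zero.2 h
  have hD2 := hD.integrable_sq
  have hE2 := hE.integrable_sq
  have hDE : Integrable (fun ω => (c - Z ω) * (Y ω - Z ω)) μ := hD.integrable_mul hE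
  have hsum : Integrable (fun ω => (c - Z ω) ^ 2 + (Y ω - Z ω) ^ 2) μ := hD2.add hE2
  calc ∫ ω, (c - Y ω) ^ 2 ∂μ
      = ∫ ω, ((c - Z ω) ^ 2 + (Y ω - Z ω) ^ 2 - 2 * ((c - Z ω) * (Y ω - Z ω))) ∂μ := by
        congr 1; ext ω; ring
    _ = ∫ ω, (c - Z ω) ^ 2 ∂μ + ∫ ω, (Y ω - Z ω) ^ 2 ∂μ := by
        rw [integral_sub hsum (hDE.const_mul 2), integral_const_mul, hcross,
          integral_add hD2 hE2]
        ring

theorem condExp_ae_eq_restrict_of_eqOn (hm : m ≤ m₀) {S : Set Ω} {f g : Ω → ℝ}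
    (hS : MeasurableSet[m] S) (hf : Integrable f μ) (hg : Integrable g μ)
    (hfg : Set.EqOn f g S) :
    μ[f|m] =ᵐ[μ.restrict S] μ[g|m] := by
  rw [ae_eq_restrict_iff_indicator_ae_eq (hm _ hS)]
  calc S.indicator (μ[f|m]) =ᵐ[μ] μ[S.indicator f|m] := (condExp_indicator hf hS).symm
    _ = μ[S.indicator g|m] := by rw [Set.indicator_congr hfg]
    _ =ᵐ[μ] S.indicator (μ[g|m]) := condExp_indicator hg hS

theorem mul_measureReal_le_setIntegral_sq_sub_condExp [IsFiniteMeasure μ] (hm : m ≤ m₀)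
    {Y : Ω → ℝ} {S : Set Ω} {v : ℝ} (hS : MeasurableSet[m] S) (hv : 0 < v)
    (hvar : ∀ᵐ ω ∂μ, ω ∈ S → v ≤ Var[Y; μ | m] ω) :
    v * μ.real S ≤ ∫ ω in S, (Y ω - μ[Y|m] ω) ^ 2 ∂μ := by
  by_cases hY : Integrable (fun ω => (Y ω - μ[Y|m] ω) ^ 2) μ
  · calc v * μ.real S = ∫ _ in S, v ∂μ := by simp [mul_comm]
      _ ≤ ∫ ω in S, Var[Y; μ | m] ω ∂μ :=
          setIntegral_mono_ae_restrict (integrable_const v).integrableOn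
            integrable_condVar.integrableOn ((ae_restrict_iff' (hm _ hS)).2 hvar)
      _ = _ := setIntegral_condVar (hm := hm) hY hS
  · -- the conditional variance is the junk value `0`, so `hvar` forces `S` to be null
    have hS0 : μ S = 0 := by
      rw [measure_eq_zero_iff_ae_notMem]
      filter_upwards [hvar] with ω hω hωS
      have := hω hωS
      rw [condVar_of_not_integrable hY] at this
      exact hv.not_ge this
    rw [measureReal_def, hS0, ENNReal.toReal_zero, mul_zero]
    exact setIntegral_nonneg (hm _ hS) fun ω _ => sq_nonneg _

end ConditionalPythagoras

section Supermartingale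

variable {Ω : Type*} {m₀ : MeasurableSpace Ω} {μ : Measure[m₀] Ω} [IsFiniteMeasure μ]
  {F : Filtration ℕ m₀} {X : ℕ → Ω → ℝ}

theorem Supermartingale.integral_const_sub_sq_add_le (hX : Supermartingale X F μ) {n : ℕ}
    {c : ℝ} (hXc : ∀ ω, X n ω ≤ c) (hX2 : MemLp (X (n + 1)) 2 μ) :
    ∫ ω, (c - X n ω) ^ 2 ∂μ + ∫ ω, (X (n + 1) ω - μ[X (n + 1)|F n] ω) ^ 2 ∂μ
      ≤ ∫ ω, (c - X (n + 1) ω) ^ 2 ∂μ := by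
  rw [integral_const_sub_sq_eq_add_condExp (F.le n) hX2 c, add_le_add_iff_right]
  refine integral_mono_of_nonneg (ae_of_all _ fun ω => sq_nonneg _)
    ((memLp_const c).sub (hX2.condExp one_le_two)).integrable_sq ?_
  filter_upwards [hX.condExp_ae_le n.le_succ] with ω hω
  exact pow_le_pow_left₀ (sub_nonneg.2 (hXc ω)) (sub_le_sub_left hω c) 2

theorem Supermartingale.integral_const_sub_sq_add_sum_le (hX : Supermartingale X F μ) {c : ℝ}
    (hXc : ∀ n ω, X n ω ≤ c) (hX2 : ∀ n, MemLp (X n) 2 μ) (N : ℕ) :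
    ∫ ω, (c - X 0 ω) ^ 2 ∂μ
        + ∑ n ∈ Finset.range N, ∫ ω, (X (n + 1) ω - μ[X (n + 1)|F n] ω) ^ 2 ∂μ
      ≤ ∫ ω, (c - X N ω) ^ 2 ∂μ := by
  induction N with
  | zero => simp
  | succ N ih =>
    rw [Finset.sum_range_succ, ← add_assoc]
    linarith [hX.integral_const_sub_sq_add_le (hXc N) (hX2 (N + 1))]

theorem Supermartingale.mul_measureReal_exists_le_le (hX : Supermartingale X F μ)
    (hX0 : ∀ n ω, 0 ≤ X n ω) {ε : ℝ} (hε : 0 ≤ ε) (N : ℕ) :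
    ε * μ.real {ω | ∃ n ≤ N, ε ≤ X n ω} ≤ ∫ ω, X 0 ω ∂μ := by
  set H : Ω → ℕ := hittingBtwn X (Set.Ici ε) 0 N
  have hH : IsStoppingTime F (fun ω => (H ω : WithTop ℕ)) :=
    hX.stronglyAdapted.adapted.isStoppingTime_hittingBtwn measurableSet_Ici
  have hHN : ∀ ω, (H ω : WithTop ℕ) ≤ N := fun ω => WithTop.coe_le_coe.2 (hittingBtwn_le ω)
  have hsub : {ω | ∃ n ≤ N, ε ≤ X n ω} ⊆
      {ω | ε ≤ stoppedValue X (fun ω => (H ω : WithTop ℕ)) ω} :=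
    fun ω ⟨n, hn, hεn⟩ => stoppedValue_hittingBtwn_mem ⟨n, ⟨n.zero_le, hn⟩, hεn⟩
  have hstop : ∫ ω, stoppedValue X (fun ω => (H ω : WithTop ℕ)) ω ∂μ ≤ ∫ ω, X 0 ω ∂μ := by
    have h := hX.neg.expected_stoppedValue_mono (isStoppingTime_const F 0) hH
      (fun ω => WithTop.coe_le_coe.2 (Nat.zero_le _)) hHN
    simp only [stoppedValue_neg, Pi.neg_apply, integral_neg] at h
    exact neg_le_neg_iff.1 h
  calc ε * μ.real {ω | ∃ n ≤ N, ε ≤ X n ω}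
      ≤ ε * μ.real {ω | ε ≤ stoppedValue X (fun ω => (H ω : WithTop ℕ)) ω} :=
        mul_le_mul_of_nonneg_left (measureReal_mono hsub) hε
    _ ≤ ∫ ω, stoppedValue X (fun ω => (H ω : WithTop ℕ)) ω ∂μ :=
        mul_meas_ge_le_integral_of_nonneg (ae_of_all _ fun ω => hX0 _ ω)
          (integrable_stoppedValue ℕ hH hX.integrable hHN) ε
    _ ≤ ∫ ω, X 0 ω ∂μ := hstop

end Supermartingale

theorem stoppedProcess_natCast_apply {Ω : Type*} (R : ℕ → Ω → ℝ) (G : Ω → ℕ) (n : ℕ) (ω : Ω) :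
    stoppedProcess R (fun ω => (G ω : WithTop ℕ)) n ω = R (min n (G ω)) ω := by
  rcases le_total n (G ω) with hn | hn
  · rw [min_eq_left hn]; exact stoppedProcess_eq_of_le (WithTop.coe_le_coe.2 hn)
  · rw [min_eq_right hn]; exact stoppedProcess_eq_of_ge (WithTop.coe_le_coe.2 hn)

section StoppedProcess

variable {Ω : Type*} {m₀ : MeasurableSpace Ω} {μ : Measure[m₀] Ω}
  {F : Filtration ℕ m₀} {R : ℕ → Ω → ℝ}

protected theorem Supermartingale.stoppedProcess [SigmaFiniteFiltration μ F] {τ : Ω → WithTop ℕ}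
    (hR : Supermartingale R F μ) (hτ : IsStoppingTime F τ) :
    Supermartingale (stoppedProcess R τ) F μ := by
  have h := (hR.neg.stoppedProcess hτ).neg
  rwa [show stoppedProcess (-R) τ = -(stoppedProcess R τ) from rfl, neg_neg] at h

theorem mul_measureReal_lt_le_integral_sq_sub_condExp_stoppedProcess [IsFiniteMeasure μ]
    {G : Ω → ℕ} (hG : IsStoppingTime F (fun ω => (G ω : WithTop ℕ))) {n : ℕ} {v : ℝ}
    (hR : Integrable (R (n + 1)) μ)
    (hX : MemLp (stoppedProcess R (fun ω => (G ω : WithTop ℕ)) (n + 1)) 2 μ) (hv : 0 < v)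
    (hvar : ∀ᵐ ω ∂μ, n < G ω → v ≤ Var[R (n + 1); μ | F n] ω) :
    v * μ.real {ω | n < G ω} ≤ ∫ ω, (stoppedProcess R (fun ω => (G ω : WithTop ℕ)) (n + 1) ω
      - μ[stoppedProcess R (fun ω => (G ω : WithTop ℕ)) (n + 1)|F n] ω) ^ 2 ∂μ := by
  set X := stoppedProcess R (fun ω => (G ω : WithTop ℕ)) (n + 1)
  set S := {ω | n < G ω}
  have hS : MeasurableSet[F n] S := by
    simpa only [Set.compl_ofPred, ENat.some_eq_natCast, Nat.cast_le, not_le] using (hG n).compl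
  have hXR : Set.EqOn X (R (n + 1)) S := fun ω hω =>
    (stoppedProcess_natCast_apply R G (n + 1) ω).trans (by rw [min_eq_left hω])
  have hcondExp := condExp_ae_eq_restrict_of_eqOn (F.le n) hS (hX.integrable one_le_two) hR hXR
  calc v * μ.real S ≤ ∫ ω in S, (R (n + 1) ω - μ[R (n + 1)|F n] ω) ^ 2 ∂μ :=
        mul_measureReal_le_setIntegral_sq_sub_condExp (F.le n) hS hv hvar
    _ = ∫ ω in S, (X ω - μ[X|F n] ω) ^ 2 ∂μ := by
        refine integral_congr_ae ?_
        filter_upwards [hcondExp, ae_restrict_mem (F.le n _ hS)] with ω hω hωS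
        rw [hω, hXR hωS]
    _ ≤ _ := setIntegral_le_integral (hX.sub (hX.condExp one_le_two)).integrable_sq
        (ae_of_all _ fun ω => sq_nonneg _)

theorem Supermartingale.mul_sum_measureReal_lt_le [IsProbabilityMeasure μ] {G : Ω → ℕ}
    (hR : Supermartingale R F μ) (hG : IsStoppingTime F (fun ω => (G ω : WithTop ℕ)))
    {c v : ℝ} (hv : 0 < v) (hRc : ∀ ω n, n ≤ G ω → R n ω ∈ Set.Icc 0 c)
    (hvar : ∀ n, ∀ᵐ ω ∂μ, n < G ω → v ≤ Var[R (n + 1); μ | F n] ω) (N : ℕ) :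
    v * ∑ n ∈ Finset.range N, μ.real {ω | n < G ω} ≤ c ^ 2 - ∫ ω, (c - R 0 ω) ^ 2 ∂μ := by
  have hX := stoppedProcess_natCast_apply R G
  have hXc : ∀ n ω, stoppedProcess R (fun ω => (G ω : WithTop ℕ)) n ω ∈ Set.Icc 0 c :=
    fun n ω => by rw [hX]; exact hRc ω _ (min_le_right _ _)
  have hX2 : ∀ n, MemLp (stoppedProcess R (fun ω => (G ω : WithTop ℕ)) n) 2 μ := fun n =>
    MemLp.of_bound ((hR.stronglyAdapted.stoppedProcess_of_discrete hG n).mono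
      (F.le n)).aestronglyMeasurable c
      (ae_of_all _ fun ω => by rw [Real.norm_eq_abs, abs_of_nonneg (hXc n ω).1]; exact (hXc n ω).2)
  have hvarX := fun n => mul_measureReal_lt_le_integral_sq_sub_condExp_stoppedProcess hG
    (hR.integrable (n + 1)) (hX2 (n + 1)) hv (hvar n)
  have h := (hR.stoppedProcess hG).integral_const_sub_sq_add_sum_le (fun n ω => (hXc n ω).2)
    hX2 N
  generalize stoppedProcess R (fun ω => (G ω : WithTop ℕ)) = X at hX hXc hX2 hvarX h
  have hXN : ∫ ω, (c - X N ω) ^ 2 ∂μ ≤ c ^ 2 := by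
    refine (integral_mono ((memLp_const c).sub (hX2 N)).integrable_sq (integrable_const (c ^ 2))
      fun ω => ?_).trans_eq (by simp)
    obtain ⟨h0, hc⟩ := hXc N ω
    exact pow_le_pow_left₀ (sub_nonneg.2 hc) (by linarith) 2
  have hX0 : X 0 = R 0 := funext fun ω => by rw [hX, Nat.zero_min]
  rw [hX0] at h
  rw [Finset.mul_sum]
  linarith [Finset.sum_le_sum fun n (_ : n ∈ Finset.range N) => hvarX n]

theorem natCast_mul_measureReal_eq_le_sum [IsFiniteMeasure μ] (G : Ω → ℕ) (N : ℕ) :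
    N * μ.real {ω | G ω = N} ≤ ∑ n ∈ Finset.range N, μ.real {ω | n < G ω} := by
  calc (N : ℝ) * μ.real {ω | G ω = N} = ∑ _n ∈ Finset.range N, μ.real {ω | G ω = N} := by simp
    _ ≤ _ := Finset.sum_le_sum fun n hn =>
      measureReal_mono fun ω (hω : G ω = N) => show n < G ω from hω ▸ Finset.mem_range.1 hn

theorem Supermartingale.mul_measureReal_min_hittingBtwn_eq_le [IsProbabilityMeasure μ]
    {τ : Ω → ℕ} {k a B v : ℝ}
    (hR : Supermartingale R F μ) (hnonneg : ∀ n ω, 0 ≤ R n ω) (h0 : ∀ ω, R 0 ω = k)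
    (hka : k < a) (hB : 0 ≤ B) (hincr : ∀ n ω, R (n + 1) ω - R n ω ≤ B)
    (hτ : IsStoppingTime F (fun ω => (τ ω : WithTop ℕ))) (hv : 0 < v)
    (hvar : ∀ n, ∀ᵐ ω ∂μ, n < τ ω → v ≤ Var[R (n + 1); μ | F n] ω) (N : ℕ) :
    v * (N * μ.real {ω | min (hittingBtwn R (Set.Ici a) 0 N ω) (min (τ ω) N) = N})
      ≤ (a + B) ^ 2 - (a + B - k) ^ 2 := by
  set G : Ω → ℕ := fun ω => min (hittingBtwn R (Set.Ici a) 0 N ω) (min (τ ω) N)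
  have hG : IsStoppingTime F (fun ω => (G ω : WithTop ℕ)) :=
    (hR.stronglyAdapted.adapted.isStoppingTime_hittingBtwn measurableSet_Ici).min
      (hτ.min (isStoppingTime_const F N))
  have hRc : ∀ ω n, n ≤ G ω → R n ω ∈ Set.Icc 0 (a + B) := fun ω n hn =>
    ⟨hnonneg n ω, le_add_of_le_hittingBtwn hB (h0 ω ▸ hka) (hincr · ω)
      (hn.trans (min_le_left _ _))⟩
  have hvarG : ∀ n, ∀ᵐ ω ∂μ, n < G ω → v ≤ Var[R (n + 1); μ | F n] ω := fun n =>
    (hvar n).mono fun ω hω hn => hω (hn.trans_le ((min_le_right _ _).trans (min_le_left _ _)))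
  have h := hR.mul_sum_measureReal_lt_le hG hv hRc hvarG N
  simp only [h0, integral_const, probReal_univ, one_smul] at h
  exact (mul_le_mul_of_nonneg_left (natCast_mul_measureReal_eq_le_sum G N) hv.le).trans h

end StoppedProcess

end MeasureTheory

/-- Modified Levin–Peres–Wilmer supermartingale bound: if `(R_j)` is a
non-negative supermartingale with `R_0 = k`, increments bounded above by `B`,
and conditional variance at least `σ² > 0` on `{τ > j}`, then for `h ≥ 2B`
and any `u > 0`, `P{τ > u} ≤ k/h + 3kh/(uσ²)`. -/
theorem stmt19 {Ω : Type*} {m : MeasurableSpace Ω} {μ : Measure Ω}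
    [IsProbabilityMeasure μ]
    (F : Filtration ℕ m) (R : ℕ → Ω → ℝ) (τ : Ω → ℕ)
    (k B σ h u : ℝ)
    (hB : 0 < B) (hσ : 0 < σ) (hh : 2 * B ≤ h) (hu : 0 < u)
    (hsuper : Supermartingale R F μ)
    (hnonneg : ∀ j ω, 0 ≤ R j ω)
    (h0 : ∀ ω, R 0 ω = k)
    (hτ : IsStoppingTime F (fun ω => (τ ω : WithTop ℕ)))
    (hincr : ∀ j ω, R (j + 1) ω - R j ω ≤ B)
    (hvar : ∀ j, ∀ᵐ ω ∂μ, j < τ ω →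
      σ ^ 2 ≤ (μ[(fun ω' => (R (j + 1) ω' - (μ[R (j + 1)|F j]) ω') ^ 2)|F j]) ω) :
    (μ {ω | u < (τ ω : ℝ)}).toReal ≤ k / h + 3 * k * h / (u * σ ^ 2) := by
  have hh0 : 0 < h := by linarith
  have hk : 0 ≤ k := by
    obtain ⟨ω⟩ := nonempty_of_isProbabilityMeasure μ
    exact h0 ω ▸ hnonneg 0 ω
  change μ.real _ ≤ _
  rcases le_or_gt h k with hkh | hkh
  · calc μ.real {ω | u < (τ ω : ℝ)} ≤ 1 := measureReal_le_one
      _ ≤ k / h := (one_le_div hh0).2 hkh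
      _ ≤ _ := le_add_of_nonneg_right (by positivity)
  set N := ⌊u⌋₊ + 1
  have hNu : u < N := by simpa [N] using Nat.lt_floor_add_one u
  have hsub : {ω | u < (τ ω : ℝ)} ⊆ {ω | N ≤ τ ω} := fun ω hω => (Nat.floor_lt hu.le).2 hω
  have hA := hsuper.mul_measureReal_exists_le_le hnonneg hh0.le N
  simp only [h0, integral_const, probReal_univ, one_smul] at hA
  have hD := hsuper.mul_measureReal_min_hittingBtwn_eq_le hnonneg h0 hkh hB.le hincr hτ
    (pow_pos hσ 2) hvar N
  set D := {ω | min (hittingBtwn R (Set.Ici h) 0 N ω) (min (τ ω) N) = N}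
  calc μ.real {ω | u < (τ ω : ℝ)} ≤ μ.real {ω | ∃ j ≤ N, h ≤ R j ω} + μ.real D :=
        (measureReal_mono (hsub.trans (setOf_le_subset_union_hittingBtwn τ))).trans
          (measureReal_union_le _ _)
    _ ≤ k / h + 3 * k * h / (u * σ ^ 2) := by
        gcongr ?_ + ?_
        · rw [le_div_iff₀ hh0]; linarith
        · rw [le_div_iff₀ (by positivity)]
          calc μ.real D * (u * σ ^ 2) = σ ^ 2 * (u * μ.real D) := by ring
            _ ≤ σ ^ 2 * (N * μ.real D) := by gcongr
            _ ≤ (h + B) ^ 2 - (h + B - k) ^ 2 := hD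
            _ ≤ 3 * k * h := by nlinarith
end
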